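/- arXiv:0907.2755 — 5 statements merged into one kernel-verified Lean document; each statement's English description precedes it below -/
import Mathlib

section
/- If some vertex of a finite strongly connected directed graph with constant out-degree has two incoming bunches (i.e., two distinct vertices each of whose entire set of outgoing edges leads exclusively to that vertex), then under every coloring of the edges turning the graph into a deterministic finite automaton, those two vertices form a stable pair: for every word s mapping them to states p and q, there exists a word w with pw = qw. -/
theorem Multiset.eq_of_map_univ_eq_replicate {α β : Type*} [Fintype α] {f : α → β} {n : ℕ}
    {r : β} (h : Multiset.map f Finset.univ.val = Multiset.replicate n r) (a : α) : f a = r :=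
  Multiset.eq_of_mem_replicate (h ▸ Multiset.mem_map_of_mem f (Finset.mem_univ_val a))

theorem List.exists_foldl_append_eq_of_forall_eq {σ α : Type*} [Nonempty α] {δ : σ → α → σ}
    {p q : σ} (h : ∀ a, δ p a = δ q a) (u : List α) :
    ∃ w : List α, (u ++ w).foldl δ p = (u ++ w).foldl δ q := by
  cases u with
  | nil => exact ⟨[Classical.arbitrary α], by simp [h]⟩
  | cons a u => exact ⟨[], by simp [h a]⟩

theorem stmt0_general {V : Type*} (k : ℕ) (hk : 0 < k)
    (outs : V → Multiset V)
    (p q r : V)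
    (hp : outs p = Multiset.replicate k r)
    (hq : outs q = Multiset.replicate k r)
    (δ : V → Fin k → V)
    (hδ : ∀ v, Multiset.map (δ v) Finset.univ.val = outs v) :
    ∀ u : List (Fin k), ∃ w : List (Fin k),
      (u ++ w).foldl δ p = (u ++ w).foldl δ q := by
  have : Nonempty (Fin k) := ⟨⟨0, hk⟩⟩
  have hpr := Multiset.eq_of_map_univ_eq_replicate ((hδ p).trans hp)
  have hqr := Multiset.eq_of_map_univ_eq_replicate ((hδ q).trans hq)
  exact List.exists_foldl_append_eq_of_forall_eq fun a => (hpr a).trans (hqr a).symm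

/-- A vertex with two incoming bunches forms a stable pair under any coloring. -/
theorem stmt0 {V : Type*} [Fintype V] [DecidableEq V] (k : ℕ) (hk : 0 < k)
    (outs : V → Multiset V)
    (hdeg : ∀ v, Multiset.card (outs v) = k)
    (hsc : ∀ u v : V, Relation.ReflTransGen (fun x y => y ∈ outs x) u v)
    (p q r : V) (hpq : p ≠ q)
    (hp : outs p = Multiset.replicate k r)
    (hq : outs q = Multiset.replicate k r)
    (δ : V → Fin k → V)
    (hδ : ∀ v, Multiset.map (δ v) Finset.univ.val = outs v) :
    ∀ u : List (Fin k), ∃ w : List (Fin k),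
      (u ++ w).foldl δ p = (u ++ w).foldl δ q :=
  stmt0_general k hk outs p q r hp hq δ hδ
end

section
/- A deterministic finite automaton possesses a synchronizing word if and only if every pair of states can be merged, i.e., for all states p, q there exists a word w with pw = qw. -/
open Finset

theorem Finset.card_image_lt_of_map_eq {α β : Type*} [DecidableEq β] {s : Finset α} {f : α → β}
    {p q : α} (hp : p ∈ s) (hq : q ∈ s) (hpq : p ≠ q) (hf : f p = f q) :
    #(s.image f) < #s :=
  card_image_le.lt_of_ne fun h => hpq (injOn_of_card_image_eq h hp hq hf)

theorem exists_word_card_image_foldl_le_one {Q A : Type*} [DecidableEq Q] (δ : Q → A → Q)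
    (hmerge : ∀ p q : Q, ∃ w : List A, w.foldl δ p = w.foldl δ q) (S : Finset Q) :
    ∃ w : List A, #(S.image (w.foldl δ)) ≤ 1 := by
  by_cases hS : #S ≤ 1
  · exact ⟨[], by simpa using hS⟩
  obtain ⟨p, hp, q, hq, hpq⟩ := one_lt_card.mp (not_le.mp hS)
  obtain ⟨w, hw⟩ := hmerge p q
  -- `hshrink` is what discharges the `termination_by` obligation of the recursive call.
  have hshrink := card_image_lt_of_map_eq (f := w.foldl δ) hp hq hpq hw
  obtain ⟨w', hw'⟩ := exists_word_card_image_foldl_le_one δ hmerge (S.image (w.foldl δ))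
  refine ⟨w ++ w', ?_⟩
  simpa only [image_image, Function.comp_def, List.foldl_append] using hw'
termination_by #S

/-- A DFA has a synchronizing word iff every pair of states can be merged. -/
theorem stmt1 {Q A : Type*} [Fintype Q] [Nonempty Q] (δ : Q → A → Q) :
    (∃ s : List A, ∃ q0 : Q, ∀ p : Q, s.foldl δ p = q0) ↔
      (∀ p q : Q, ∃ w : List A, w.foldl δ p = w.foldl δ q) := by
  classical
  refine ⟨fun ⟨s, q0, hs⟩ p q => ⟨s, by rw [hs p, hs q]⟩, fun hmerge => ?_⟩
  obtain ⟨w, hw⟩ := exists_word_card_image_foldl_le_one δ hmerge univ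
  refine ⟨w, w.foldl δ (Classical.arbitrary Q), fun p => ?_⟩
  exact card_le_one.mp hw _ (mem_image_of_mem _ (mem_univ p)) _ (mem_image_of_mem _ (mem_univ _))
end

section
/- If a finite strongly connected directed graph with constant out-degree admits a synchronizing coloring, then the greatest common divisor of the lengths of all its cycles is 1. -/
/- Reading a synchronizing word `s` from the sink state `q₀` returns to `q₀`, and so does reading
any letter followed by `s`; the lengths `|s|` and `|s| + 1` of these closed walks are coprime. -/

def hasWalk {V : Type*} (E : V → V → Prop) : ℕ → V → V → Prop
  | 0, u, v => u = v
  | (n + 1), u, v => ∃ x, E u x ∧ hasWalk E n x v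

theorem hasWalk_foldl {V α : Type*} {E : V → V → Prop} {δ : V → α → V}
    (hδ : ∀ p a, E p (δ p a)) : ∀ (s : List α) (p : V), hasWalk E s.length p (s.foldl δ p)
  | [], _ => rfl
  | a :: s, p => ⟨δ p a, hδ p a, hasWalk_foldl hδ s (δ p a)⟩

theorem mem_of_map_univ_eq {V : Type*} {k : ℕ} {outs : V → Multiset V} {δ : V → Fin k → V}
    (hδ : ∀ v, Multiset.map (δ v) Finset.univ.val = outs v) (v : V) (a : Fin k) :
    δ v a ∈ outs v :=
  hδ v ▸ Multiset.mem_map_of_mem _ (Finset.mem_univ_val a)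

theorem stmt2_general {V : Type*} (k : ℕ) (hk : 0 < k)
    (outs : V → Multiset V)
    (hsync : ∃ δ : V → Fin k → V,
      (∀ v, Multiset.map (δ v) Finset.univ.val = outs v) ∧
      ∃ s : List (Fin k), ∃ q0 : V, ∀ p : V, s.foldl δ p = q0) :
    ∀ d : ℕ, (∀ n : ℕ, 0 < n → (∃ v : V, hasWalk (fun x y => y ∈ outs x) n v v) → d ∣ n)
      → d = 1 := by
  intro d hd
  obtain ⟨δ, hδ, s, q0, hq0⟩ := hsync
  have hwalk := hasWalk_foldl (E := fun x y => y ∈ outs x) (mem_of_map_univ_eq hδ)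
  have hdvd_length : d ∣ s.length := by
    rcases Nat.eq_zero_or_pos s.length with h0 | hpos
    · exact h0 ▸ dvd_zero d
    · exact hd _ hpos ⟨q0, by simpa only [hq0] using hwalk s q0⟩
  have hdvd_length_succ : d ∣ s.length + 1 :=
    hd _ s.length.succ_pos
      ⟨q0, by simpa only [List.length_cons, List.foldl_cons, hq0] using hwalk (⟨0, hk⟩ :: s) q0⟩
  exact Nat.dvd_one.mp ((Nat.dvd_add_right hdvd_length).mp hdvd_length_succ)

/-- If a strongly connected graph of constant out-degree admits a synchronizing
coloring, then the gcd of the lengths of all its cycles is 1. -/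
theorem stmt2 {V : Type*} [Fintype V] [DecidableEq V] [Nonempty V] (k : ℕ) (hk : 0 < k)
    (outs : V → Multiset V)
    (hdeg : ∀ v, Multiset.card (outs v) = k)
    (hsc : ∀ u v : V, Relation.ReflTransGen (fun x y => y ∈ outs x) u v)
    (hsync : ∃ δ : V → Fin k → V,
      (∀ v, Multiset.map (δ v) Finset.univ.val = outs v) ∧
      ∃ s : List (Fin k), ∃ q0 : V, ∀ p : V, s.foldl δ p = q0) :
    ∀ d : ℕ, (∀ n : ℕ, 0 < n → (∃ v : V, hasWalk (fun x y => y ∈ outs x) n v v) → d ∣ n)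
      → d = 1 :=
  stmt2_general k hk outs hsync
end

section
/- A deterministic finite automaton with n states that possesses a synchronizing word has a synchronizing word of length at most n³. -/
/-!
Two states `p, q` that are merged by some word are merged by one of length `< n²`: in the
pair automaton on `Q × Q`, the shortest path from `(p, q)` to the diagonal visits no pair twice.
Applying such a short merging word to a set of states shrinks its image by at least one, so
`n - 1` merges synchronize all of `Q`, giving a word of length at most `(n - 1) n² ≤ n³`.
-/

theorem List.exists_length_lt_card_foldl_eq {σ α : Type*} [Fintype σ] (f : σ → α → σ) (s : σ)
    (x : List α) : ∃ y : List α, y.length < Fintype.card σ ∧ y.foldl f s = x.foldl f s := by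
  induction hn : x.length using Nat.strong_induction_on generalizing x with
  | _ n ih =>
    by_cases hx : x.length < Fintype.card σ
    · exact ⟨x, hx, rfl⟩
    let M : DFA α σ := ⟨f, s, ∅⟩
    obtain ⟨q, a, b, c, rfl, -, hb, ha, hbq, hc⟩ := M.evalFrom_split (not_lt.mp hx) rfl
    have hshorter : (a ++ c).length < n := by
      have := List.length_pos_iff.mpr hb
      simp only [← hn, List.length_append]
      omega
    obtain ⟨y, hy, hyx⟩ := ih _ hshorter (a ++ c) rfl
    refine ⟨y, hy, hyx.trans ?_⟩
    change M.evalFrom s (a ++ c) = M.evalFrom s (a ++ b ++ c)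
    rw [M.evalFrom_of_append, M.evalFrom_of_append, M.evalFrom_of_append, ha, hbq]

theorem List.foldl_pair {Q A : Type*} (δ : Q → A → Q) (w : List A) (p q : Q) :
    w.foldl (fun r a => (δ r.1 a, δ r.2 a)) (p, q) = (w.foldl δ p, w.foldl δ q) := by
  induction w generalizing p q with
  | nil => rfl
  | cons a w ih => exact ih _ _

theorem exists_merge_length_lt_card_sq {Q A : Type*} [Fintype Q] (δ : Q → A → Q) {p q : Q}
    (hmerge : ∃ w : List A, w.foldl δ p = w.foldl δ q) :
    ∃ v : List A, v.length < Fintype.card Q ^ 2 ∧ v.foldl δ p = v.foldl δ q := by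
  obtain ⟨w, hw⟩ := hmerge
  obtain ⟨v, hv, hvw⟩ :=
    List.exists_length_lt_card_foldl_eq (fun r a => (δ r.1 a, δ r.2 a)) (p, q) w
  rw [List.foldl_pair, List.foldl_pair, Prod.mk.injEq] at hvw
  refine ⟨v, by simpa [Fintype.card_prod, sq] using hv, ?_⟩
  rw [hvw.1, hvw.2, hw]

theorem exists_merge_finset_length_le {Q A : Type*} [Fintype Q] [DecidableEq Q]
    (δ : Q → A → Q) (hmerge : ∀ p q : Q, ∃ w : List A, w.foldl δ p = w.foldl δ q)
    (S : Finset Q) :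
    ∃ w : List A, w.length ≤ (S.card - 1) * Fintype.card Q ^ 2 ∧
      ∀ p ∈ S, ∀ q ∈ S, w.foldl δ p = w.foldl δ q := by
  induction hn : S.card using Nat.strong_induction_on generalizing S with
  | _ n ih =>
    by_cases hS : S.card ≤ 1
    · exact ⟨[], Nat.zero_le _, fun p hp q hq => Finset.card_le_one.mp hS p hp q hq⟩
    obtain ⟨p, hp, q, hq, hpq⟩ := Finset.one_lt_card.mp (not_le.mp hS)
    obtain ⟨v, hv, hvpq⟩ := exists_merge_length_lt_card_sq δ (hmerge p q)
    set T := (S.erase q).image (fun r => v.foldl δ r)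
    have hT : T.card ≤ n - 1 :=
      (Finset.card_image_le).trans (Finset.card_erase_of_mem hq ▸ hn ▸ le_rfl)
    have hmapsTo : ∀ r ∈ S, v.foldl δ r ∈ T := by
      intro r hr
      by_cases hrq : r = q
      · exact hrq ▸ hvpq ▸ Finset.mem_image_of_mem _ (Finset.mem_erase.mpr ⟨hpq, hp⟩)
      · exact Finset.mem_image_of_mem _ (Finset.mem_erase.mpr ⟨hrq, hr⟩)
    obtain ⟨w, hw, hwT⟩ := ih T.card (by omega) T rfl
    refine ⟨v ++ w, ?_, fun r hr r' hr' => ?_⟩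
    · have : (T.card - 1) * Fintype.card Q ^ 2 ≤ (n - 2) * Fintype.card Q ^ 2 :=
        Nat.mul_le_mul_right _ (by omega)
      calc (v ++ w).length ≤ Fintype.card Q ^ 2 + (n - 2) * Fintype.card Q ^ 2 := by
            rw [List.length_append]; omega
        _ = (n - 1) * Fintype.card Q ^ 2 := by
            rw [show n - 1 = n - 2 + 1 by omega, Nat.succ_mul, Nat.add_comm]
    · rw [List.foldl_append, List.foldl_append]
      exact hwT _ (hmapsTo r hr) _ (hmapsTo r' hr')

/-- A synchronizing DFA with `n` states has a synchronizing word of length at most `n^3`. -/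
theorem stmt10 {Q A : Type*} [Fintype Q] (δ : Q → A → Q)
    (hsync : ∃ s : List A, ∃ q0 : Q, ∀ p : Q, s.foldl δ p = q0) :
    ∃ s : List A, s.length ≤ (Fintype.card Q) ^ 3 ∧
      ∃ q0 : Q, ∀ p : Q, s.foldl δ p = q0 := by
  classical
  obtain ⟨s, q0, hs⟩ := hsync
  have hmerge (p q : Q) : ∃ w : List A, w.foldl δ p = w.foldl δ q := ⟨s, (hs p).trans (hs q).symm⟩
  obtain ⟨w, hw, hsyncw⟩ := exists_merge_finset_length_le δ hmerge Finset.univ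
  refine ⟨w, ?_, w.foldl δ q0, fun p => hsyncw p (Finset.mem_univ _) q0 (Finset.mem_univ _)⟩
  calc w.length ≤ (Fintype.card Q - 1) * Fintype.card Q ^ 2 := by rwa [Finset.card_univ] at hw
    _ ≤ Fintype.card Q * Fintype.card Q ^ 2 := Nat.mul_le_mul_right _ (Nat.sub_le _ _)
    _ = Fintype.card Q ^ 3 := by ring
end

section
/- In a finite strongly connected directed graph where every vertex has out-degree at least 1, if the greatest common divisor of the lengths of all cycles is 1, then there exists an integer N such that for all n ≥ N and all ordered pairs of vertices (u, v), there is a directed walk from u to v of length exactly n. -/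
/-! In a strongly connected graph every divisor of the closed-walk lengths at one vertex `v₀`
divides every cycle length, since a cycle at `v` can be spliced into a closed walk
`v₀ → v → v₀`. So these lengths, which form an additive submonoid of `ℕ`, have gcd `1`, and
hence contain every large enough `n` (the Frobenius number exists). Walks from `u` to `v`
are then obtained by padding such closed walks with fixed walks `u → v₀` and `v₀ → v`,
whose lengths are bounded because the graph is finite. -/

section

variable {V : Type*} (E : V → V → Prop)

theorem hasWalk_add {m n : ℕ} {u x v : V} (h₁ : hasWalk E m u x) (h₂ : hasWalk E n x v) :
    hasWalk E (m + n) u v := by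
  induction m generalizing u with
  | zero =>
    subst h₁
    simpa using h₂
  | succ m ih =>
    obtain ⟨y, hy, hw⟩ := h₁
    rw [Nat.succ_add]
    exact ⟨y, hy, ih hw⟩

theorem exists_hasWalk_of_reflTransGen {u v : V} (h : Relation.ReflTransGen E u v) :
    ∃ n, hasWalk E n u v := by
  induction h with
  | refl => exact ⟨0, rfl⟩
  | tail _ e ih =>
    obtain ⟨n, hn⟩ := ih
    exact ⟨n + 1, hasWalk_add E hn ⟨_, e, rfl⟩⟩

def closedWalkLengths (v : V) : AddSubmonoid ℕ where
  carrier := {n | hasWalk E n v v}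
  zero_mem' := rfl
  add_mem' := hasWalk_add E

theorem dvd_of_hasWalk_self_of_forall_dvd_closedWalkLengths
    (hsc : ∀ u v : V, Relation.ReflTransGen E u v) {v₀ : V} {d : ℕ}
    (hd : ∀ m ∈ closedWalkLengths E v₀, d ∣ m) {n : ℕ} {v : V} (hv : hasWalk E n v v) :
    d ∣ n := by
  obtain ⟨a, ha⟩ := exists_hasWalk_of_reflTransGen E (hsc v₀ v)
  obtain ⟨b, hb⟩ := exists_hasWalk_of_reflTransGen E (hsc v v₀)
  have hround : d ∣ a + b := hd _ (hasWalk_add E ha hb)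
  have hsplice : d ∣ a + b + n := by
    rw [Nat.add_right_comm, Nat.add_assoc]
    exact hd _ (hasWalk_add E ha (hasWalk_add E hv hb))
  exact (Nat.dvd_add_right hround).mp hsplice

theorem exists_forall_ge_hasWalk_self
    (hsc : ∀ u v : V, Relation.ReflTransGen E u v)
    (hgcd : ∀ d : ℕ, (∀ n : ℕ, 0 < n → (∃ v : V, hasWalk E n v v) → d ∣ n) → d = 1)
    (v₀ : V) : ∃ N, ∀ n ≥ N, hasWalk E n v₀ v₀ := by
  have hgcd₀ : Nat.setGcd (closedWalkLengths E v₀ : Set ℕ) = 1 :=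
    hgcd _ fun _ _ ⟨_, hv⟩ ↦ dvd_of_hasWalk_self_of_forall_dvd_closedWalkLengths E hsc
      (fun _ ↦ Nat.setGcd_dvd_of_mem) hv
  obtain ⟨N, hN⟩ := Nat.exists_mem_closure_of_ge (closedWalkLengths E v₀ : Set ℕ)
  rw [AddSubmonoid.closure_eq, hgcd₀] at hN
  exact ⟨N, fun n hn ↦ hN n hn (one_dvd n)⟩

theorem exists_forall_ge_hasWalk_of_forall_ge_hasWalk_self [Fintype V]
    (hsc : ∀ u v : V, Relation.ReflTransGen E u v) {v₀ : V} {N : ℕ}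
    (hN : ∀ n ≥ N, hasWalk E n v₀ v₀) : ∃ M, ∀ n ≥ M, ∀ u v : V, hasWalk E n u v := by
  choose a ha using fun u ↦ exists_hasWalk_of_reflTransGen E (hsc u v₀)
  choose b hb using fun v ↦ exists_hasWalk_of_reflTransGen E (hsc v₀ v)
  refine ⟨Finset.univ.sup a + N + Finset.univ.sup b, fun n hn u v ↦ ?_⟩
  have hau : a u ≤ Finset.univ.sup a := Finset.le_sup (Finset.mem_univ u)
  have hbv : b v ≤ Finset.univ.sup b := Finset.le_sup (Finset.mem_univ v)
  obtain ⟨m, hm, rfl⟩ : ∃ m ≥ N, n = a u + (m + b v) := ⟨n - a u - b v, by omega, by omega⟩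
  exact hasWalk_add E (ha u) (hasWalk_add E (hN m hm) (hb v))

end

theorem stmt11_general {V : Type*} [Fintype V] (E : V → V → Prop)
    (hsc : ∀ u v : V, Relation.ReflTransGen E u v)
    (hgcd : ∀ d : ℕ, (∀ n : ℕ, 0 < n → (∃ v : V, hasWalk E n v v) → d ∣ n) → d = 1) :
    ∃ N : ℕ, ∀ n ≥ N, ∀ u v : V, hasWalk E n u v := by
  rcases isEmpty_or_nonempty V with hV | ⟨⟨v₀⟩⟩
  · exact ⟨0, fun _ _ u ↦ isEmptyElim u⟩
  obtain ⟨N, hN⟩ := exists_forall_ge_hasWalk_self E hsc hgcd v₀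
  exact exists_forall_ge_hasWalk_of_forall_ge_hasWalk_self E hsc hN

/-- In a strongly connected digraph with all out-degrees at least 1 and cycle-length gcd 1,
all long enough walk lengths are realized between every pair of vertices. -/
theorem stmt11 {V : Type*} [Fintype V] [Nonempty V] (E : V → V → Prop)
    (hout : ∀ v : V, ∃ w : V, E v w)
    (hsc : ∀ u v : V, Relation.ReflTransGen E u v)
    (hgcd : ∀ d : ℕ, (∀ n : ℕ, 0 < n → (∃ v : V, hasWalk E n v v) → d ∣ n) → d = 1) :
    ∃ N : ℕ, ∀ n ≥ N, ∀ u v : V, hasWalk E n u v :=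
  stmt11_general E hsc hgcd
end
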